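/- Let ρ > 1 be a real number, let v : Ω → EuclideanSpace ℝ (Fin d) be a finite family of unit vectors with |⟪v i, v j⟫| = 1/ρ for all i ≠ j, and suppose the two-graph (Ω, C) of these lines is a regular two-graph with parameters (n, a, b). Let Γ ⊆ Ω be an incoherent subset with |Γ| = d ≥ 2, and suppose there exist γ₀ ∈ Ω∖Γ and α₀ ∈ Γ with 2·|Γ ∩ S_{γ₀α₀}| = d. Then d = ρ(ρ − 1) and n = (ρ − 1)(ρ² − 1). Moreover, if ρ > 2, then for every three pairwise distinct α, β, δ ∈ Γ, 2 · #{γ ∈ Ω∖Γ : β ∉ S_{γα} and δ ∉ S_{γα}} = 2(n − d) − 3a (so the parts of size d/2 of the partitions of Γ induced by the elements γ ∈ Ω∖Γ form a 3-(d, d/2, n − d − 3a/2) design). -/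

import Mathlib

/-
Switch the signs of the lines of the incoherent set `Γ` so that all their mutual inner products
become `1/ρ`. They then form a basis of `ℝ^d` with Gram matrix `((ρ - 1) I + J) / ρ`, and inverting
this matrix expresses the inner products of the other lines through their sign patterns
`t_γ : Γ → {±1}`. For a unit vector `v γ` this gives `d - ρ(ρ - 1) = (∑ t_γ)² / (ρ - 1 + d)`; since
`∑ t_γ` measures the imbalance of the partition of `Γ` induced by `γ`, one balanced partition forces
`d = ρ(ρ - 1)`, and then every partition is balanced. For two lines `γ ≠ k` outside `Γ` the same
formula gives `∑ t_γ t_k = ±(ρ - 1)`, so exactly `(d - ρ + 1)/2` points of `Γ` are coherent with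
them. Counting coherent triples through a point of `Γ`, and through `γ₀`, in two ways gives two
equations in `a` and `n`, whence `n = (ρ - 1)(ρ² - 1)`. For the design, the two-graph axiom on
`{γ, α, β, δ}` with `{α, β, δ}` incoherent puts each `γ ∉ Γ` in zero or two of the coherent triples
`{γ, α, β}, {γ, α, δ}, {γ, β, δ}`, each of which occurs for exactly `a` points `γ`.
-/

open scoped RealInnerProductSpace
open Finset

/-- The set `S_{xy} = {z : {x,y,z} ∈ C}` associated to a two-graph `(Ω, C)`. -/
def Sset {Ω : Type*} [Fintype Ω] [DecidableEq Ω] (C : Finset (Finset Ω)) (x y : Ω) :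
    Finset Ω :=
  univ.filter fun z => ({x, y, z} : Finset Ω) ∈ C

section Gram

variable {E ι : Type*} [NormedAddCommGroup E] [InnerProductSpace ℝ E] [Fintype ι]
  [DecidableEq ι] {u : ι → E} {κ : ℝ}

theorem inner_sum_smul_of_inner_eq_ite (hu : ∀ i j, ⟪u i, u j⟫ = if i = j then 1 else κ)
    (c : ι → ℝ) (j : ι) :
    ⟪u j, ∑ i, c i • u i⟫ = (1 - κ) * c j + κ * ∑ i, c i := by
  have hterm : ∀ i, ⟪u j, c i • u i⟫ = κ * c i + if j = i then (1 - κ) * c i else 0 := by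
    intro i
    rw [real_inner_smul_right, hu]
    split_ifs <;> ring
  simp only [inner_sum, hterm, sum_add_distrib, ← mul_sum, sum_ite_eq, mem_univ, if_true]
  ring

theorem linearIndependent_of_inner_eq_ite (hκ0 : 0 ≤ κ) (hκ1 : κ < 1)
    (hu : ∀ i j, ⟪u i, u j⟫ = if i = j then 1 else κ) : LinearIndependent ℝ u := by
  rw [Fintype.linearIndependent_iff]
  intro g hg
  have hnorm : ⟪∑ i, g i • u i, ∑ i, g i • u i⟫ = (1 - κ) * ∑ i, g i ^ 2 + κ * (∑ i, g i) ^ 2 := by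
    simp only [sum_inner, real_inner_smul_left, inner_sum_smul_of_inner_eq_ite hu, mul_add,
      sum_add_distrib, ← sum_mul]
    simp only [mul_left_comm _ (1 - κ), ← mul_sum, sq]
    ring
  rw [hg, inner_zero_left] at hnorm
  have hsq : ∑ i, g i ^ 2 = 0 := by
    nlinarith [sum_nonneg fun i (_ : i ∈ univ) => sq_nonneg (g i), sq_nonneg (∑ i, g i)]
  intro i
  exact pow_eq_zero_iff two_ne_zero |>.1 <|
    (sum_eq_zero_iff_of_nonneg fun i _ => sq_nonneg (g i)).1 hsq i (mem_univ i)

/-- Inverting the Gram matrix `(1 - κ) I + κ J` of a basis `u`. -/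
theorem inner_eq_of_inner_eq_ite [FiniteDimensional ℝ E] (hκ0 : 0 ≤ κ) (hκ1 : κ < 1)
    (hu : ∀ i j, ⟪u i, u j⟫ = if i = j then 1 else κ) (hcard : Fintype.card ι = Module.finrank ℝ E)
    (y z : E) :
    (1 - κ) * ⟪y, z⟫ = ∑ i, ⟪u i, y⟫ * ⟪u i, z⟫ -
      κ * (∑ i, ⟪u i, y⟫) * (∑ i, ⟪u i, z⟫) / (1 - κ + κ * Fintype.card ι) := by
  have hli := linearIndependent_of_inner_eq_ite hκ0 hκ1 hu
  let b := Module.Basis.mk hli (hli.span_eq_top_of_card_eq_finrank' hcard).ge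
  set D := 1 - κ + κ * Fintype.card ι
  have hD : 0 < D := by positivity
  have h1κ : 0 < 1 - κ := by linarith
  set X := ∑ i, ⟪u i, y⟫
  set c : ι → ℝ := fun i => (⟪u i, y⟫ - κ * X / D) / (1 - κ)
  have hc : ∑ i, c i = X / D := by
    simp only [c, ← sum_div, sum_sub_distrib, sum_const, card_univ, nsmul_eq_mul]
    field_simp
    simp only [D]
    ring
  have hy : y = ∑ i, c i • u i := by
    refine InnerProductSpace.ext_inner_left_basis b fun i => ?_
    rw [Module.Basis.coe_mk, inner_sum_smul_of_inner_eq_ite hu, hc]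
    simp only [c]
    field_simp
    ring
  have hyz : ⟪y, z⟫ = ∑ i, c i * ⟪u i, z⟫ := by
    conv_lhs => rw [hy]
    simp only [sum_inner, real_inner_smul_left]
  have hterm : ∀ i, (1 - κ) * (c i * ⟪u i, z⟫) = ⟪u i, y⟫ * ⟪u i, z⟫ - κ * X / D * ⟪u i, z⟫ := by
    intro i
    simp only [c]
    field_simp
  rw [hyz, mul_sum, sum_congr rfl fun i _ => hterm i, sum_sub_distrib, ← mul_sum]
  ring

end Gram

theorem two_mul_card_filter_neg_eq {ι : Type*} {s : Finset ι} {y : ι → ℝ}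
    (hy : ∀ i ∈ s, y i ^ 2 = 1) : 2 * (#{i ∈ s | y i < 0} : ℝ) = #s - ∑ i ∈ s, y i := by
  have hval : ∀ i ∈ s, y i = if y i < 0 then -1 else 1 := by
    intro i hi
    rcases sq_eq_one_iff.1 (hy i hi) with h | h <;> simp [h]
  have hcard : (#{i ∈ s | y i < 0} : ℝ) + #{i ∈ s | ¬ y i < 0} = #s := by
    exact_mod_cast card_filter_add_card_filter_not _
  rw [sum_congr rfl hval, sum_ite, sum_const, sum_const]
  simp only [nsmul_eq_mul, mul_neg, mul_one]
  linarith

section TwoGraph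

variable {Ω : Type*} [DecidableEq Ω] {C : Finset (Finset Ω)} {x y z : Ω}

theorem ne_of_mem_of_card_eq_three (hC3 : ∀ c ∈ C, c.card = 3)
    (hxyz : ({x, y, z} : Finset Ω) ∈ C) : x ≠ y ∧ x ≠ z ∧ y ≠ z := by
  have h3 := hC3 _ hxyz
  refine ⟨?_, ?_, ?_⟩ <;> rintro rfl <;> simp [card_insert_eq_ite] at h3 <;> split_ifs at h3 <;>
    omega

def IsIncoherent (C : Finset (Finset Ω)) (Γ : Finset Ω) : Prop :=
  ∀ t ⊆ Γ, t.card = 3 → t ∉ C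

theorem IsIncoherent.notMem {Γ : Finset Ω} (hinc : IsIncoherent C Γ)
    (hC3 : ∀ c ∈ C, c.card = 3) (hx : x ∈ Γ) (hy : y ∈ Γ) (hz : z ∈ Γ) :
    ({x, y, z} : Finset Ω) ∉ C := fun hxyz =>
  hinc _ (by simp [insert_subset_iff, hx, hy, hz]) (hC3 _ hxyz) hxyz

variable [Fintype Ω]

@[simp]
theorem mem_Sset : z ∈ Sset C x y ↔ ({x, y, z} : Finset Ω) ∈ C := by
  simp [Sset]

theorem mem_Sset_rotate : z ∈ Sset C x y ↔ x ∈ Sset C y z := by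
  rw [mem_Sset, mem_Sset, insert_comm, pair_comm x z]

theorem mem_Sset_comm : z ∈ Sset C x y ↔ y ∈ Sset C x z := by
  rw [mem_Sset, mem_Sset, pair_comm]

theorem card_Sset (hC3 : ∀ c ∈ C, c.card = 3) {a : ℕ}
    (ha : ∀ p : Finset Ω, p.card = 2 → (C.filter fun c => p ⊆ c).card = a) (hxy : x ≠ y) :
    #(Sset C x y) = a := by
  rw [← ha {x, y} (card_pair hxy)]
  have himage : (Sset C x y).image (fun z => {x, y, z}) = C.filter fun c => {x, y} ⊆ c := by
    ext c
    simp only [mem_image, mem_Sset, mem_filter]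
    constructor
    · rintro ⟨z, hz, rfl⟩
      exact ⟨hz, by simp [insert_subset_iff]⟩
    · rintro ⟨hc, hxyc⟩
      obtain ⟨z, hz⟩ := card_eq_one.1 <| by
        rw [card_sdiff_of_subset hxyc, hC3 c hc, card_pair hxy]
      have hxyz : ({x, y, z} : Finset Ω) = c := by
        rw [← sdiff_union_of_subset hxyc, hz]
        ext
        simp only [mem_insert, mem_singleton, mem_union]
        tauto
      exact ⟨z, hxyz ▸ hc, hxyz⟩
  rw [← himage, card_image_of_injOn]
  intro z₁ hz₁ z₂ _ heq
  obtain ⟨-, hxz₁, hyz₁⟩ := ne_of_mem_of_card_eq_three hC3 (mem_Sset.1 hz₁)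
  have hz₁ : z₁ ∈ ({x, y, z₂} : Finset Ω) := by
    rw [← show ({x, y, z₁} : Finset Ω) = {x, y, z₂} from heq]
    simp
  simp only [mem_insert, mem_singleton] at hz₁
  tauto

variable {a : ℕ} {Γ : Finset Ω}

theorem IsIncoherent.two_mul_card_erase_mul_eq (hinc : IsIncoherent C Γ)
    (hC3 : ∀ c ∈ C, c.card = 3)
    (ha : ∀ p : Finset Ω, p.card = 2 → (C.filter fun c => p ⊆ c).card = a) {α : Ω} (hα : α ∈ Γ)
    (hbal : ∀ γ ∉ Γ, 2 * #(Γ ∩ Sset C γ α) = #Γ) :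
    2 * (#(Γ.erase α) * a) = #(univ \ Γ) * #Γ := by
  have hdc := sum_card_bipartiteAbove_eq_sum_card_bipartiteBelow (s := Γ.erase α)
    (t := univ \ Γ) (r := fun β γ => γ ∈ Sset C α β)
  have habove : ∀ β ∈ Γ.erase α,
      #(bipartiteAbove (fun β γ => γ ∈ Sset C α β) (univ \ Γ) β) = a := by
    intro β hβ
    obtain ⟨hβα, hβ⟩ := mem_erase.1 hβ
    rw [bipartiteAbove, filter_mem_eq_inter, inter_eq_right.2, card_Sset hC3 ha (Ne.symm hβα)]
    intro γ hγ
    simp only [mem_sdiff, mem_univ, true_and]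
    exact fun hγΓ => hinc.notMem hC3 hα hβ hγΓ (mem_Sset.1 hγ)
  have hbelow : ∀ γ ∈ univ \ Γ,
      #(bipartiteBelow (fun β γ => γ ∈ Sset C α β) (Γ.erase α) γ) = #(Γ ∩ Sset C γ α) := by
    intro γ _
    congr 1
    ext β
    simp only [bipartiteBelow, mem_filter, mem_erase, mem_inter]
    rw [← mem_Sset_rotate]
    constructor
    · tauto
    · rintro ⟨hβ, hmem⟩
      exact ⟨⟨(ne_of_mem_of_card_eq_three hC3 (mem_Sset.1 hmem)).2.2.symm, hβ⟩, hmem⟩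
  rw [sum_congr rfl habove, sum_congr rfl hbelow, sum_const, smul_eq_mul] at hdc
  rw [hdc, mul_sum, sum_congr rfl fun γ hγ => hbal γ (mem_sdiff.1 hγ).2, sum_const, smul_eq_mul]

theorem card_mul_two_mul_sub_card_eq (hC3 : ∀ c ∈ C, c.card = 3)
    (ha : ∀ p : Finset Ω, p.card = 2 → (C.filter fun c => p ⊆ c).card = a)
    {γ₀ : Ω} (hγ₀ : γ₀ ∉ Γ) (hbal : ∀ α ∈ Γ, 2 * #(Γ ∩ Sset C γ₀ α) = #Γ) {m : ℝ}
    (hpair : ∀ k ∉ Γ, k ≠ γ₀ → 2 * (#(Γ ∩ Sset C γ₀ k) : ℝ) = m) :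
    (#Γ : ℝ) * (2 * a - #Γ) = #((univ \ Γ).erase γ₀) * m := by
  have hdc := sum_card_bipartiteAbove_eq_sum_card_bipartiteBelow (s := Γ)
    (t := (univ \ Γ).erase γ₀) (r := fun α k => k ∈ Sset C γ₀ α)
  have habove : ∀ α ∈ Γ,
      2 * (#(bipartiteAbove (fun α k => k ∈ Sset C γ₀ α) ((univ \ Γ).erase γ₀) α) : ℝ) =
        2 * a - #Γ := by
    intro α hα
    have hsdiff : bipartiteAbove (fun α k => k ∈ Sset C γ₀ α) ((univ \ Γ).erase γ₀) α =
        Sset C γ₀ α \ Γ := by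
      ext k
      simp only [bipartiteAbove, mem_filter, mem_erase, mem_sdiff, mem_univ, true_and]
      constructor
      · tauto
      · rintro ⟨hk, hkΓ⟩
        exact ⟨⟨(ne_of_mem_of_card_eq_three hC3 (mem_Sset.1 hk)).2.1.symm, hkΓ⟩, hk⟩
    have hsplit := card_inter_add_card_sdiff (Sset C γ₀ α) Γ
    rw [card_Sset hC3 ha (ne_of_mem_of_not_mem hα hγ₀).symm, inter_comm] at hsplit
    rw [hsdiff, ← hsplit, ← hbal α hα]
    push_cast
    ring
  have hbelow : ∀ k ∈ (univ \ Γ).erase γ₀,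
      2 * (#(bipartiteBelow (fun α k => k ∈ Sset C γ₀ α) Γ k) : ℝ) = m := by
    intro k hk
    obtain ⟨hkγ₀, hk⟩ := mem_erase.1 hk
    rw [bipartiteBelow, ← hpair k (mem_sdiff.1 hk).2 hkγ₀]
    congr 3
    ext α
    simp only [mem_filter, mem_inter]
    rw [mem_Sset_comm]
  have h2dc := congrArg (fun n : ℕ => 2 * (n : ℝ)) hdc
  simp only [Nat.cast_sum, mul_sum] at h2dc
  rwa [sum_congr rfl habove, sum_congr rfl hbelow, sum_const, sum_const, nsmul_eq_mul,
    nsmul_eq_mul] at h2dc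

end TwoGraph

section Equiangular

variable {Ω E : Type*} [NormedAddCommGroup E] [InnerProductSpace ℝ E]
  {v : Ω → E} {ρ : ℝ} {C : Finset (Finset Ω)} {Γ : Finset Ω} {ε : Ω → ℝ}

structure SwitchesToPositive (v : Ω → E) (ρ : ℝ) (Γ : Finset Ω) (ε : Ω → ℝ) : Prop where
  sq_eq_one : ∀ β, ε β ^ 2 = 1
  inner_eq : ∀ α ∈ Γ, ∀ β ∈ Γ, α ≠ β → ⟪v α, v β⟫ = ε α * ε β / ρ

/-- The sign `t_γ(β) = ρ ⟪v γ, ε β • v β⟫ = ±1` of `v γ` against the switched line through `v β`. -/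
def switchSign (v : Ω → E) (ρ : ℝ) (ε : Ω → ℝ) (γ β : Ω) : ℝ :=
  ρ * ε β * ⟪v γ, v β⟫

theorem inner_eq_mul_switchSign (hρ : ρ ≠ 0) (hε : ∀ β, ε β ^ 2 = 1) (γ β : Ω) :
    ⟪v γ, v β⟫ = ε β * switchSign v ρ ε γ β / ρ := by
  rw [switchSign]
  field_simp
  linear_combination (-⟪v γ, v β⟫) * hε β

variable [DecidableEq Ω]

structure IsEquiangularTwoGraph (v : Ω → E) (ρ : ℝ) (C : Finset (Finset Ω)) : Prop where
  norm_eq_one : ∀ i, ‖v i‖ = 1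
  abs_inner : ∀ i j, i ≠ j → |⟪v i, v j⟫| = 1 / ρ
  card_eq_three : ∀ c ∈ C, c.card = 3
  mem_iff : ∀ i j k, i ≠ j → i ≠ k → j ≠ k →
    (({i, j, k} : Finset Ω) ∈ C ↔ ⟪v i, v j⟫ * ⟪v i, v k⟫ * ⟪v j, v k⟫ < 0)

namespace IsEquiangularTwoGraph

theorem sq_mul_inner (h : IsEquiangularTwoGraph v ρ C) (hρ : 0 < ρ) {i j : Ω} (hij : i ≠ j) :
    (ρ * ⟪v i, v j⟫) ^ 2 = 1 := by
  rw [mul_pow, ← sq_abs ⟪v i, v j⟫, h.abs_inner i j hij]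
  field_simp

theorem inner_ne_zero (h : IsEquiangularTwoGraph v ρ C) (hρ : 0 < ρ) {i j : Ω} (hij : i ≠ j) :
    ⟪v i, v j⟫ ≠ 0 := by
  intro h0
  simpa [h0] using h.sq_mul_inner hρ hij

theorem mem_iff_mem_iff (h : IsEquiangularTwoGraph v ρ C) (hρ : 0 < ρ) {w x y z : Ω}
    (hwx : w ≠ x) (hwy : w ≠ y) (hwz : w ≠ z) (hxy : x ≠ y) (hxz : x ≠ z) (hyz : y ≠ z) :
    (({w, x, y} : Finset Ω) ∈ C ↔ ({w, x, z} : Finset Ω) ∈ C) ↔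
      (({w, y, z} : Finset Ω) ∈ C ↔ ({x, y, z} : Finset Ω) ∈ C) := by
  have hsign : ∀ p q : ℝ, p ≠ 0 → q ≠ 0 → ((p < 0 ↔ q < 0) ↔ 0 < p * q) := by
    intro p q hp hq
    rcases hp.lt_or_gt with hp | hp <;> rcases hq.lt_or_gt with hq | hq <;>
      simp [mul_pos_iff, hp, hq, hp.not_gt, hq.not_gt]
  have hne := fun {i j : Ω} (hij : i ≠ j) => h.inner_ne_zero hρ hij
  rw [h.mem_iff _ _ _ hwx hwy hxy, h.mem_iff _ _ _ hwx hwz hxz, h.mem_iff _ _ _ hwy hwz hyz,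
    h.mem_iff _ _ _ hxy hxz hyz, hsign _ _ (by simp [*]) (by simp [*]),
    hsign _ _ (by simp [*]) (by simp [*])]
  refine pos_iff_pos_of_mul_pos ?_
  have hprod : 0 < (⟪v w, v x⟫ * ⟪v w, v y⟫ * ⟪v w, v z⟫ * ⟪v x, v y⟫ * ⟪v x, v z⟫ *
      ⟪v y, v z⟫) ^ 2 := by
    positivity [hne hwx, hne hwy, hne hwz, hne hxy, hne hxz, hne hyz]
  linear_combination hprod

theorem exists_switchesToPositive (h : IsEquiangularTwoGraph v ρ C) (hρ : 0 < ρ)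
    (hinc : IsIncoherent C Γ) : ∃ ε, SwitchesToPositive v ρ Γ ε := by
  rcases Γ.eq_empty_or_nonempty with rfl | ⟨α₀, hα₀⟩
  · exact ⟨1, fun _ => one_pow 2, by simp⟩
  refine ⟨fun β => if β = α₀ then 1 else ρ * ⟪v α₀, v β⟫, fun β => ?_,
    fun α hα β hβ hαβ => ?_⟩
  · split_ifs with hβ
    · exact one_pow 2
    · exact h.sq_mul_inner hρ (Ne.symm hβ)
  by_cases hα' : α = α₀
  · subst hα'
    simp [Ne.symm hαβ, hρ.ne']
  by_cases hβ' : β = α₀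
  · subst hβ'
    simp [hα', hρ.ne', real_inner_comm]
  simp only [hα', hβ', if_false]
  have hα₀α : α₀ ≠ α := Ne.symm hα'
  have hα₀β : α₀ ≠ β := Ne.symm hβ'
  have hprod : 0 < ⟪v α₀, v α⟫ * ⟪v α₀, v β⟫ * ⟪v α, v β⟫ := by
    refine lt_of_le_of_ne (not_lt.1 fun hneg => hinc.notMem h.card_eq_three hα₀ hα hβ <|
      (h.mem_iff _ _ _ hα₀α hα₀β hαβ).2 hneg) (Ne.symm ?_)
    simp [h.inner_ne_zero hρ, *]
  have hone : ρ ^ 3 * (⟪v α₀, v α⟫ * ⟪v α₀, v β⟫ * ⟪v α, v β⟫) = 1 := by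
    refine (pow_eq_one_iff_of_nonneg (by positivity) two_ne_zero).1 ?_
    linear_combination (ρ * ⟪v α₀, v β⟫) ^ 2 * (ρ * ⟪v α, v β⟫) ^ 2 * h.sq_mul_inner hρ hα₀α +
      (ρ * ⟪v α, v β⟫) ^ 2 * h.sq_mul_inner hρ hα₀β + h.sq_mul_inner hρ hαβ
  field_simp
  linear_combination (ρ * ⟪v α₀, v α⟫ * ⟪v α₀, v β⟫) * hone -
    ⟪v α, v β⟫ * (ρ * ⟪v α₀, v β⟫) ^ 2 * h.sq_mul_inner hρ hα₀α -
    ⟪v α, v β⟫ * h.sq_mul_inner hρ hα₀β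

theorem sq_switchSign (h : IsEquiangularTwoGraph v ρ C) (hρ : 0 < ρ) (hε : ∀ β, ε β ^ 2 = 1)
    {γ β : Ω} (hγβ : γ ≠ β) : switchSign v ρ ε γ β ^ 2 = 1 := by
  rw [switchSign, mul_right_comm, mul_pow, h.sq_mul_inner hρ hγβ, hε, one_mul]

theorem mul_inner_eq_sum_switchSign [FiniteDimensional ℝ E] (h : IsEquiangularTwoGraph v ρ C)
    (hρ : 1 < ρ) (hε : SwitchesToPositive v ρ Γ ε) (hd : #Γ = Module.finrank ℝ E) (γ k : Ω) :
    ρ * (ρ - 1) * ⟪v γ, v k⟫ = ∑ β ∈ Γ, switchSign v ρ ε γ β * switchSign v ρ ε k β -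
      (∑ β ∈ Γ, switchSign v ρ ε γ β) * (∑ β ∈ Γ, switchSign v ρ ε k β) / (ρ - 1 + #Γ) := by
  have hρ0 : 0 < ρ := one_pos.trans hρ
  have hgram : ∀ β δ : Γ, ⟪ε β • v β, ε δ • v δ⟫ = if β = δ then 1 else 1 / ρ := by
    intro β δ
    rw [real_inner_smul_left, real_inner_smul_right]
    split_ifs with hβδ
    · rw [hβδ, real_inner_self_eq_norm_sq, h.norm_eq_one, ← mul_assoc, ← sq, hε.sq_eq_one]
      norm_num
    · rw [hε.inner_eq β β.2 δ δ.2 (Subtype.coe_ne_coe.2 hβδ)]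
      field_simp
      linear_combination (ε δ) ^ 2 * hε.sq_eq_one β + hε.sq_eq_one δ
  have hcoord : ∀ x : Ω, ∀ β : Γ, ⟪ε β • v β, v x⟫ = switchSign v ρ ε x β / ρ := by
    intro x β
    rw [real_inner_smul_left, switchSign, real_inner_comm]
    field_simp
  have key := inner_eq_of_inner_eq_ite (by positivity) ((div_lt_one hρ0).2 hρ) hgram
    (by rw [Fintype.card_coe, hd]) (v γ) (v k)
  simp only [hcoord, Fintype.card_coe, sum_coe_sort Γ fun β => switchSign v ρ ε γ β / ρ,
    sum_coe_sort Γ fun β => switchSign v ρ ε k β / ρ,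
    sum_coe_sort Γ fun β => switchSign v ρ ε γ β / ρ * (switchSign v ρ ε k β / ρ)] at key
  simp only [← sum_div, div_mul_div_comm] at key
  field_simp at key ⊢
  linear_combination key

theorem card_sub_sq_sum_switchSign [FiniteDimensional ℝ E] (h : IsEquiangularTwoGraph v ρ C)
    (hρ : 1 < ρ) (hε : SwitchesToPositive v ρ Γ ε) (hd : #Γ = Module.finrank ℝ E) {γ : Ω}
    (hγ : γ ∉ Γ) :
    ρ * (ρ - 1) = #Γ - (∑ β ∈ Γ, switchSign v ρ ε γ β) ^ 2 / (ρ - 1 + #Γ) := by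
  have key := h.mul_inner_eq_sum_switchSign hρ hε hd γ γ
  rw [real_inner_self_eq_norm_sq, h.norm_eq_one, one_pow, mul_one, ← sq] at key
  rwa [sum_congr rfl fun β hβ => by
    rw [← sq, h.sq_switchSign (one_pos.trans hρ) hε.sq_eq_one (ne_of_mem_of_not_mem hβ hγ).symm],
    sum_const, nsmul_one] at key

theorem sum_switchSign_eq_zero [FiniteDimensional ℝ E] (h : IsEquiangularTwoGraph v ρ C)
    (hρ : 1 < ρ) (hε : SwitchesToPositive v ρ Γ ε) (hd : #Γ = Module.finrank ℝ E)
    (hcard : (#Γ : ℝ) = ρ * (ρ - 1)) {γ : Ω} (hγ : γ ∉ Γ) :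
    ∑ β ∈ Γ, switchSign v ρ ε γ β = 0 := by
  have key := h.card_sub_sq_sum_switchSign hρ hε hd hγ
  have hD : ρ - 1 + #Γ ≠ 0 := by
    linarith [(Nat.cast_nonneg #Γ : (0 : ℝ) ≤ #Γ)]
  have hsq : (∑ β ∈ Γ, switchSign v ρ ε γ β) ^ 2 / (ρ - 1 + #Γ) = 0 := by linarith
  exact pow_eq_zero_iff two_ne_zero |>.1 ((div_eq_zero_iff.1 hsq).resolve_right hD)

variable [Fintype Ω]

theorem mem_Sset_iff_switchSign_mul_neg (h : IsEquiangularTwoGraph v ρ C) (hρ : 0 < ρ)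
    (hε : SwitchesToPositive v ρ Γ ε) {γ α β : Ω} (hγ : γ ∉ Γ) (hα : α ∈ Γ) (hβ : β ∈ Γ) :
    β ∈ Sset C γ α ↔ switchSign v ρ ε γ α * switchSign v ρ ε γ β < 0 := by
  have hγα := (ne_of_mem_of_not_mem hα hγ).symm
  have hγβ := (ne_of_mem_of_not_mem hβ hγ).symm
  rw [mem_Sset]
  by_cases hαβ : α = β
  · subst hαβ
    rw [← sq, h.sq_switchSign hρ hε.sq_eq_one hγα]
    exact iff_of_false (fun hmem => (ne_of_mem_of_card_eq_three h.card_eq_three hmem).2.2 rfl)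
      (by norm_num)
  have hprod : ⟪v γ, v α⟫ * ⟪v γ, v β⟫ * ⟪v α, v β⟫ =
      switchSign v ρ ε γ α * switchSign v ρ ε γ β / ρ ^ 3 := by
    rw [inner_eq_mul_switchSign hρ.ne' hε.sq_eq_one γ α,
      inner_eq_mul_switchSign hρ.ne' hε.sq_eq_one γ β, hε.inner_eq α hα β hβ hαβ]
    field_simp
    linear_combination (switchSign v ρ ε γ α * switchSign v ρ ε γ β) *
      (ε β ^ 2 * hε.sq_eq_one α + hε.sq_eq_one β)
  rw [h.mem_iff γ α β hγα hγβ hαβ, hprod, div_neg_iff]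
  simp [pow_pos hρ 3, (pow_pos hρ 3).not_gt]

theorem two_mul_card_inter_Sset_eq_sub (h : IsEquiangularTwoGraph v ρ C) (hρ : 0 < ρ)
    (hε : SwitchesToPositive v ρ Γ ε) {γ α : Ω} (hγ : γ ∉ Γ) (hα : α ∈ Γ) :
    2 * (#(Γ ∩ Sset C γ α) : ℝ) =
      #Γ - switchSign v ρ ε γ α * ∑ β ∈ Γ, switchSign v ρ ε γ β := by
  rw [← filter_mem_eq_inter, filter_congr fun β hβ =>
    h.mem_Sset_iff_switchSign_mul_neg hρ hε hγ hα hβ, mul_sum]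
  refine two_mul_card_filter_neg_eq fun β hβ => ?_
  rw [mul_pow, h.sq_switchSign hρ hε.sq_eq_one (ne_of_mem_of_not_mem hα hγ).symm,
    h.sq_switchSign hρ hε.sq_eq_one (ne_of_mem_of_not_mem hβ hγ).symm, one_mul]

theorem card_eq_of_two_mul_card_inter_Sset_eq [FiniteDimensional ℝ E]
    (h : IsEquiangularTwoGraph v ρ C) (hρ : 1 < ρ) (hinc : IsIncoherent C Γ)
    (hd : #Γ = Module.finrank ℝ E) {γ α : Ω} (hγ : γ ∉ Γ) (hα : α ∈ Γ)
    (hhalf : 2 * #(Γ ∩ Sset C γ α) = #Γ) : (#Γ : ℝ) = ρ * (ρ - 1) := by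
  have hρ0 : 0 < ρ := one_pos.trans hρ
  obtain ⟨ε, hε⟩ := h.exists_switchesToPositive hρ0 hinc
  have hcount := h.two_mul_card_inter_Sset_eq_sub hρ0 hε hγ hα
  have hσ : switchSign v ρ ε γ α ≠ 0 := fun h0 => by
    simpa [h0] using h.sq_switchSign hρ0 hε.sq_eq_one (ne_of_mem_of_not_mem hα hγ).symm
  have hS : ∑ β ∈ Γ, switchSign v ρ ε γ β = 0 := by
    refine (mul_eq_zero.1 ?_).resolve_left hσ
    rw [← Nat.cast_ofNat, ← Nat.cast_mul, hhalf] at hcount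
    linarith
  rw [h.card_sub_sq_sum_switchSign hρ hε hd hγ, hS]
  ring

theorem two_mul_card_inter_Sset_eq [FiniteDimensional ℝ E]
    (h : IsEquiangularTwoGraph v ρ C) (hρ : 1 < ρ) (hinc : IsIncoherent C Γ)
    (hd : #Γ = Module.finrank ℝ E) (hcard : (#Γ : ℝ) = ρ * (ρ - 1)) {γ α : Ω} (hγ : γ ∉ Γ)
    (hα : α ∈ Γ) : 2 * #(Γ ∩ Sset C γ α) = #Γ := by
  have hρ0 : 0 < ρ := one_pos.trans hρ
  obtain ⟨ε, hε⟩ := h.exists_switchesToPositive hρ0 hinc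
  have hcount := h.two_mul_card_inter_Sset_eq_sub hρ0 hε hγ hα
  rw [h.sum_switchSign_eq_zero hρ hε hd hcard hγ, mul_zero, sub_zero] at hcount
  exact_mod_cast hcount

theorem two_mul_card_inter_Sset_eq_of_notMem [FiniteDimensional ℝ E]
    (h : IsEquiangularTwoGraph v ρ C) (hρ : 1 < ρ) (hinc : IsIncoherent C Γ)
    (hd : #Γ = Module.finrank ℝ E) (hcard : (#Γ : ℝ) = ρ * (ρ - 1)) {γ k : Ω} (hγ : γ ∉ Γ)
    (hk : k ∉ Γ) (hγk : γ ≠ k) : 2 * (#(Γ ∩ Sset C γ k) : ℝ) = #Γ - (ρ - 1) := by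
  have hρ0 : 0 < ρ := one_pos.trans hρ
  have hρ1 : 0 < ρ - 1 := sub_pos.2 hρ
  obtain ⟨ε, hε⟩ := h.exists_switchesToPositive hρ0 hinc
  set σ := switchSign v ρ ε
  set P := ∑ β ∈ Γ, σ γ β * σ k β
  have hP : ⟪v γ, v k⟫ = P / (ρ * (ρ - 1)) := by
    rw [eq_div_iff (by positivity), mul_comm, h.mul_inner_eq_sum_switchSign hρ hε hd γ k,
      h.sum_switchSign_eq_zero hρ hε hd hcard hγ, zero_mul, zero_div, sub_zero]
  have hP2 : P ^ 2 = (ρ - 1) ^ 2 := by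
    have := h.sq_mul_inner hρ0 hγk
    rw [hP] at this
    field_simp at this
    linear_combination this
  have hmem : ∀ α ∈ Γ, α ∈ Sset C γ k ↔ P * (σ γ α * σ k α) / (ρ - 1) < 0 := by
    intro α hα
    have hγα := (ne_of_mem_of_not_mem hα hγ).symm
    have hkα := (ne_of_mem_of_not_mem hα hk).symm
    have hprod :
        ⟪v γ, v k⟫ * ⟪v γ, v α⟫ * ⟪v k, v α⟫ = P * (σ γ α * σ k α) / (ρ - 1) / ρ ^ 3 := by
      rw [hP, inner_eq_mul_switchSign hρ0.ne' hε.sq_eq_one γ α,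
        inner_eq_mul_switchSign hρ0.ne' hε.sq_eq_one k α]
      field_simp
      linear_combination P * σ γ α * σ k α * hε.sq_eq_one α
    rw [mem_Sset, h.mem_iff γ k α hγk hγα hkα, hprod, div_neg_iff]
    simp [pow_pos hρ0 3, (pow_pos hρ0 3).not_gt]
  rw [← filter_mem_eq_inter, filter_congr hmem, two_mul_card_filter_neg_eq]
  · rw [← sum_div, ← mul_sum]
    field_simp
    linear_combination -hP2
  · intro α hα
    rw [div_pow, mul_pow, mul_pow, hP2,
      h.sq_switchSign hρ0 hε.sq_eq_one (ne_of_mem_of_not_mem hα hγ).symm,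
      h.sq_switchSign hρ0 hε.sq_eq_one (ne_of_mem_of_not_mem hα hk).symm]
    field_simp

theorem two_mul_card_filter_notMem_Sset (h : IsEquiangularTwoGraph v ρ C) (hρ : 0 < ρ)
    (hinc : IsIncoherent C Γ) {a : ℕ}
    (ha : ∀ p : Finset Ω, p.card = 2 → (C.filter fun c => p ⊆ c).card = a) {α β δ : Ω}
    (hα : α ∈ Γ) (hβ : β ∈ Γ) (hδ : δ ∈ Γ) (hαβ : α ≠ β) (hαδ : α ≠ δ) (hβδ : β ≠ δ) :
    2 * (#{γ ∈ univ \ Γ | β ∉ Sset C γ α ∧ δ ∉ Sset C γ α} : ℤ) = 2 * #(univ \ Γ) - 3 * a := by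
  have hcount : ∀ {x y : Ω}, x ∈ Γ → y ∈ Γ → x ≠ y →
      (#{γ ∈ univ \ Γ | y ∈ Sset C γ x} : ℤ) = a := by
    intro x y hx hy hxy
    rw [← card_Sset h.card_eq_three ha hxy]
    congr 2
    ext γ
    simp only [mem_filter, mem_sdiff, mem_univ, true_and, mem_Sset_rotate (z := y)]
    exact ⟨fun hγ => hγ.2, fun hγ => ⟨fun hγΓ => hinc.notMem h.card_eq_three hx hy hγΓ
      (mem_Sset.1 hγ), hγ⟩⟩
  have hpoint : ∀ γ ∈ univ \ Γ,
      ((if β ∈ Sset C γ α then 1 else 0) + (if δ ∈ Sset C γ α then 1 else 0) +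
        (if δ ∈ Sset C γ β then 1 else 0) : ℤ) =
        2 - 2 * if β ∉ Sset C γ α ∧ δ ∉ Sset C γ α then 1 else 0 := by
    intro γ hγ
    have hγΓ := (mem_sdiff.1 hγ).2
    have hparity := h.mem_iff_mem_iff hρ (ne_of_mem_of_not_mem hα hγΓ).symm
      (ne_of_mem_of_not_mem hβ hγΓ).symm (ne_of_mem_of_not_mem hδ hγΓ).symm hαβ hαδ hβδ
    have hαβδ := hinc.notMem h.card_eq_three hα hβ hδ
    simp only [mem_Sset]
    by_cases hA : ({γ, α, β} : Finset Ω) ∈ C <;> by_cases hB : ({γ, α, δ} : Finset Ω) ∈ C <;>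
      simp_all
  have hsum := sum_congr rfl hpoint
  simp only [sum_add_distrib, sum_boole, sum_sub_distrib, ← mul_sum, sum_const,
    nsmul_eq_mul] at hsum
  rw [hcount hα hβ hαβ, hcount hα hδ hαδ, hcount hβ hδ hβδ] at hsum
  linarith

end IsEquiangularTwoGraph

end Equiangular

theorem stmt_13_general {Ω : Type*} [Fintype Ω] [DecidableEq Ω] (d : ℕ)
    (ρ : ℝ) (hρ : 1 < ρ)
    (v : Ω → EuclideanSpace ℝ (Fin d))
    (hunit : ∀ i, ‖v i‖ = 1)
    (hangle : ∀ i j : Ω, i ≠ j → |⟪v i, v j⟫| = 1 / ρ)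
    (C : Finset (Finset Ω))
    (hC3 : ∀ c ∈ C, c.card = 3)
    (hCdef : ∀ i j k : Ω, i ≠ j → i ≠ k → j ≠ k →
      (({i, j, k} : Finset Ω) ∈ C ↔ ⟪v i, v j⟫ * ⟪v i, v k⟫ * ⟪v j, v k⟫ < 0))
    (n a : ℕ)
    (hn : Fintype.card Ω = n)
    (ha : ∀ p : Finset Ω, p.card = 2 → (C.filter fun c => p ⊆ c).card = a)
    (Γ : Finset Ω) (hΓcard : Γ.card = d)
    (hinc : ∀ t ⊆ Γ, t.card = 3 → t ∉ C)
    (hhalf : ∃ γ₀ : Ω, γ₀ ∉ Γ ∧ ∃ α₀ ∈ Γ, 2 * (Γ ∩ Sset C γ₀ α₀).card = d) :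
    (d : ℝ) = ρ * (ρ - 1) ∧
    (n : ℝ) = (ρ - 1) * (ρ ^ 2 - 1) ∧
    (2 < ρ →
      ∀ α ∈ Γ, ∀ β ∈ Γ, ∀ δ ∈ Γ, α ≠ β → α ≠ δ → β ≠ δ →
        2 * (((univ \ Γ).filter fun γ =>
            β ∉ Sset C γ α ∧ δ ∉ Sset C γ α).card : ℤ)
          = 2 * ((n : ℤ) - d) - 3 * a) := by
  obtain ⟨γ₀, hγ₀, α₀, hα₀, hhalf⟩ := hhalf
  subst hΓcard hn
  have h : IsEquiangularTwoGraph v ρ C := ⟨hunit, hangle, hC3, hCdef⟩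
  have hdim : #Γ = Module.finrank ℝ (EuclideanSpace ℝ (Fin #Γ)) := by simp
  have hd := h.card_eq_of_two_mul_card_inter_Sset_eq hρ hinc hdim hγ₀ hα₀ hhalf
  have hpairs := card_mul_two_mul_sub_card_eq hC3 ha hγ₀
    (fun α hα => h.two_mul_card_inter_Sset_eq hρ hinc hdim hd hγ₀ hα) fun k hk hkγ₀ =>
      h.two_mul_card_inter_Sset_eq_of_notMem hρ hinc hdim hd hγ₀ hk (Ne.symm hkγ₀)
  have htriples : (2 * (#(Γ.erase α₀) * a) : ℝ) = #(univ \ Γ) * #Γ := by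
    exact_mod_cast IsIncoherent.two_mul_card_erase_mul_eq hinc hC3 ha hα₀ fun γ hγ =>
      h.two_mul_card_inter_Sset_eq hρ hinc hdim hd hγ hα₀
  have hcompl : #(univ \ Γ) + #Γ = Fintype.card Ω := card_sdiff_add_card_eq_card (subset_univ Γ)
  rw [card_erase_of_mem (mem_sdiff.2 ⟨mem_univ γ₀, hγ₀⟩)] at hpairs
  rw [card_erase_of_mem hα₀] at htriples
  push_cast [card_pos.2 ⟨α₀, hα₀⟩, card_pos.2 ⟨γ₀, mem_sdiff.2 ⟨mem_univ γ₀, hγ₀⟩⟩, hd]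
    at hpairs htriples
  refine ⟨hd, ?_, fun _ α hα β hβ δ hδ hαβ hαδ hβδ => ?_⟩
  · have hρ' : (ρ - 1) ^ 2 * (ρ + 1) ≠ 0 := by positivity
    have hout : (#(univ \ Γ) : ℝ) = (ρ - 1) * (ρ ^ 2 - ρ - 1) := mul_left_cancel₀ hρ' <| by
      linear_combination (ρ * (ρ - 1) - 1) * hpairs - ρ * (ρ - 1) * htriples
    rw [← hcompl, Nat.cast_add, hout, hd]
    ring
  · rw [show (Fintype.card Ω : ℤ) - #Γ = #(univ \ Γ) by omega]
    exact h.two_mul_card_filter_notMem_Sset (one_pos.trans hρ) hinc ha hα hβ hδ hαβ hαδ hβδ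

/-- **Theorem 7.3 (Gillespie).** If a set of equiangular lines in `ℝ^d` with angle `1/ρ` and
regular two-graph contains an incoherent set `Γ` of `d` lines with some part
`|Γ₁(γ₀)| = d/2`, then `d = ρ(ρ-1)`, `n = (ρ-1)(ρ²-1)`, and (for `ρ > 2`) the parts of the
induced partitions of `Γ` form a `3-(d, d/2, n - d - 3a/2)` design. -/
theorem stmt_13 {Ω : Type*} [Fintype Ω] [DecidableEq Ω] (d : ℕ) (hd : 2 ≤ d)
    (ρ : ℝ) (hρ : 1 < ρ)
    (v : Ω → EuclideanSpace ℝ (Fin d))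
    (hunit : ∀ i, ‖v i‖ = 1)
    (hangle : ∀ i j : Ω, i ≠ j → |⟪v i, v j⟫| = 1 / ρ)
    (C : Finset (Finset Ω))
    (hC3 : ∀ c ∈ C, c.card = 3)
    (hCdef : ∀ i j k : Ω, i ≠ j → i ≠ k → j ≠ k →
      (({i, j, k} : Finset Ω) ∈ C ↔ ⟪v i, v j⟫ * ⟪v i, v k⟫ * ⟪v j, v k⟫ < 0))
    (n a b : ℕ)
    (hn : Fintype.card Ω = n)
    (ha : ∀ p : Finset Ω, p.card = 2 → (C.filter fun c => p ⊆ c).card = a)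
    (hb : ∀ c ∈ C, (((univ : Finset Ω).powersetCard 4).filter
      (fun Q => c ⊆ Q ∧ ∀ t ∈ Q.powersetCard 3, t ∈ C)).card = b)
    (Γ : Finset Ω) (hΓcard : Γ.card = d)
    (hinc : ∀ t ⊆ Γ, t.card = 3 → t ∉ C)
    (hhalf : ∃ γ₀ : Ω, γ₀ ∉ Γ ∧ ∃ α₀ ∈ Γ, 2 * (Γ ∩ Sset C γ₀ α₀).card = d) :
    (d : ℝ) = ρ * (ρ - 1) ∧
    (n : ℝ) = (ρ - 1) * (ρ ^ 2 - 1) ∧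
    (2 < ρ →
      ∀ α ∈ Γ, ∀ β ∈ Γ, ∀ δ ∈ Γ, α ≠ β → α ≠ δ → β ≠ δ →
        2 * (((univ \ Γ).filter fun γ =>
            β ∉ Sset C γ α ∧ δ ∉ Sset C γ α).card : ℤ)
          = 2 * ((n : ℤ) - d) - 3 * a) :=
  stmt_13_general d ρ hρ v hunit hangle C hC3 hCdef n a hn ha Γ hΓcard hinc hhalf
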